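/- arXiv:2202.00553 — 3 statements merged into one kernel-verified Lean document; each statement's English description precedes it below -/
import Mathlib

section
/- For a standard Gaussian random variable w and any real constant A, E[w³·Φ(A·w)] = (1/√(2π))·(A/√(A²+1))·(2 + 1/(A²+1)). -/
open MeasureTheory ProbabilityTheory Real
open scoped NNReal ENNReal

noncomputable def stdGaussian : Measure ℝ := gaussianReal 0 1

/-- Standard normal CDF. -/
noncomputable def Phi (t : ℝ) : ℝ := (stdGaussian (Set.Iic t)).toReal

noncomputable def gpdf (x : ℝ) : ℝ := (Real.sqrt (2 * π))⁻¹ * Real.exp (-x ^ 2 / 2)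

lemma gpdf_eq : gaussianPDFReal 0 1 = gpdf := by
  rw [gaussianPDFReal_def]
  funext x
  simp [gpdf]

lemma gpdf_nonneg (x : ℝ) : 0 ≤ gpdf x := by
  unfold gpdf; positivity

lemma gpdf_cont : Continuous gpdf := by
  unfold gpdf
  continuity

lemma gpdf_le (x : ℝ) : gpdf x ≤ (Real.sqrt (2 * π))⁻¹ := by
  unfold gpdf
  have h1 : Real.exp (-x ^ 2 / 2) ≤ 1 := by
    rw [Real.exp_le_one_iff]
    nlinarith [sq_nonneg x]
  have h2 : (0:ℝ) ≤ (Real.sqrt (2 * π))⁻¹ := by positivity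
  nlinarith

lemma stdGaussian_eq :
    _root_.stdGaussian = MeasureTheory.volume.withDensity (fun x => ENNReal.ofReal (gpdf x)) := by
  rw [_root_.stdGaussian, gaussianReal_of_var_ne_zero 0 one_ne_zero]
  congr 1
  funext x
  rw [gaussianPDF, gpdf_eq]

lemma integral_stdGaussian (f : ℝ → ℝ) :
    ∫ x, f x ∂stdGaussian = ∫ x, f x * gpdf x := by
  rw [stdGaussian_eq]
  have : (fun x => ENNReal.ofReal (gpdf x)) = (fun x => ((Real.toNNReal (gpdf x) : ℝ≥0) : ℝ≥0∞)) := rfl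
  rw [this, integral_withDensity_eq_integral_smul]
  · congr 1; funext x
    rw [NNReal.smul_def, smul_eq_mul, Real.coe_toNNReal _ (gpdf_nonneg x), mul_comm]
  · exact (measurable_real_toNNReal.comp (gpdf_cont.measurable))

lemma integrable_stdGaussian_iff (f : ℝ → ℝ) :
    Integrable f stdGaussian ↔ Integrable (fun x => f x * gpdf x) := by
  rw [stdGaussian_eq]
  rw [integrable_withDensity_iff]
  · constructor <;> intro h <;> [skip; skip] <;>
      · refine h.congr (Filter.Eventually.of_forall fun x => ?_)
        simp [ENNReal.toReal_ofReal (gpdf_nonneg x)]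
  · exact (ENNReal.measurable_ofReal.comp gpdf_cont.measurable)
  · exact Filter.Eventually.of_forall fun x => ENNReal.ofReal_lt_top

lemma Phi_eq (t : ℝ) : Phi t = ∫ x in Set.Iic t, gpdf x := by
  rw [Phi, _root_.stdGaussian, gaussianReal_apply_eq_integral 0 one_ne_zero, gpdf_eq]
  exact ENNReal.toReal_ofReal (setIntegral_nonneg measurableSet_Iic fun x _ => gpdf_nonneg x)

lemma gpdf_integrableOn (s : Set ℝ) : IntegrableOn gpdf s := by
  apply Integrable.integrableOn
  have h := integrable_exp_neg_mul_sq (b := (1:ℝ)/2) (by norm_num)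
  have : gpdf = fun x => (Real.sqrt (2*π))⁻¹ * Real.exp (-(1/2) * x ^ 2) := by
    funext x; unfold gpdf; ring_nf
  rw [this]
  exact h.const_mul _

lemma hasDerivAt_Phi (t : ℝ) : HasDerivAt Phi (gpdf t) t := by
  have key : ∀ u : ℝ, Phi u = Phi 0 + ∫ x in (0:ℝ)..u, gpdf x := by
    intro u
    rw [Phi_eq, Phi_eq]
    rw [← intervalIntegral.integral_Iic_sub_Iic (gpdf_integrableOn _) (gpdf_integrableOn _)]
    ring
  have h2 : HasDerivAt (fun u => Phi 0 + ∫ x in (0:ℝ)..u, gpdf x) (gpdf t) t := by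
    apply HasDerivAt.const_add
    apply intervalIntegral.integral_hasDerivAt_right
    · exact (gpdf_integrableOn _).intervalIntegrable
    · exact gpdf_cont.stronglyMeasurable.stronglyMeasurableAtFilter
    · exact gpdf_cont.continuousAt
  exact h2.congr_of_eventuallyEq (Filter.Eventually.of_forall key)

lemma Phi_cont : Continuous Phi :=
  continuous_iff_continuousAt.2 fun t => (hasDerivAt_Phi t).continuousAt

lemma Phi_nonneg (t : ℝ) : 0 ≤ Phi t := ENNReal.toReal_nonneg

lemma Phi_le_one (t : ℝ) : Phi t ≤ 1 := by
  rw [Phi]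
  have : stdGaussian (Set.Iic t) ≤ 1 := by
    rw [_root_.stdGaussian]
    exact prob_le_one
  exact ENNReal.toReal_le_of_le_ofReal one_pos.le (by simpa using this)


lemma gpdf_even (x : ℝ) : gpdf (-x) = gpdf x := by
  unfold gpdf; rw [show (-x) ^ 2 = x ^ 2 by ring]

lemma integral_x3_gpdf : ∫ x, x ^ 3 * gpdf x = 0 := by
  have h := integral_neg_eq_self (fun x => x ^ 3 * gpdf x) MeasureTheory.volume
  have h2 : (∫ x : ℝ, (-x) ^ 3 * gpdf (-x)) = ∫ x : ℝ, -(x ^ 3 * gpdf x) := by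
    congr 1; funext x; rw [gpdf_even]; ring
  rw [h2, integral_neg] at h
  linarith

lemma integrable_pow_gpdf (n : ℕ) : Integrable (fun x => |x| ^ n * gpdf x) := by
  have h := integrable_rpow_mul_exp_neg_mul_sq (b := (1:ℝ)/2) (by norm_num) (s := n)
    (lt_of_lt_of_le neg_one_lt_zero (by positivity))
  have h2 := (h.abs.const_mul ((Real.sqrt (2*π))⁻¹))
  refine h2.congr (Filter.Eventually.of_forall fun x => ?_)
  show (Real.sqrt (2*π))⁻¹ * |x ^ (n:ℝ) * Real.exp (-(1/2) * x ^ 2)| = |x| ^ n * gpdf x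
  rw [Real.rpow_natCast]
  unfold gpdf
  rw [abs_mul, abs_of_nonneg (Real.exp_nonneg _), ← pow_abs]
  have : Real.exp (-(1/2) * x ^ 2) = Real.exp (-x^2/2) := by ring_nf
  rw [this]; ring

lemma integrable_cube_stdGaussian : Integrable (fun w => |w| ^ 3) stdGaussian := by
  rw [integrable_stdGaussian_iff]
  exact integrable_pow_gpdf 3

lemma integrable_bound_stdGaussian :
    Integrable (fun w => (Real.sqrt (2*π))⁻¹ * w ^ 4) stdGaussian := by
  rw [integrable_stdGaussian_iff]
  have := (integrable_pow_gpdf 4).const_mul ((Real.sqrt (2*π))⁻¹)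
  refine this.congr (Filter.Eventually.of_forall fun x => ?_)
  show (Real.sqrt (2*π))⁻¹ * (|x| ^ 4 * gpdf x) = (Real.sqrt (2*π))⁻¹ * x ^ 4 * gpdf x
  rw [← abs_pow, abs_of_nonneg (by positivity : (0:ℝ) ≤ x ^ 4)]
  ring

lemma integral_x4_exp {b : ℝ} (hb : 0 < b) :
    ∫ x : ℝ, x ^ 4 * Real.exp (-b * x ^ 2) = 3/4 * Real.sqrt π * b ^ (-(5:ℝ)/2) := by
  have h := integral_comp_abs (f := fun t => t ^ 4 * Real.exp (-b * t ^ 2))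
  have h1 : (∫ x : ℝ, |x| ^ 4 * Real.exp (-b * |x| ^ 2))
      = ∫ x : ℝ, x ^ 4 * Real.exp (-b * x ^ 2) := by
    congr 1; funext x
    rw [sq_abs, ← abs_pow, abs_of_nonneg (by positivity : (0:ℝ) ≤ x ^ 4)]
  rw [h1] at h
  have h2 : (∫ x in Set.Ioi (0:ℝ), x ^ 4 * Real.exp (-b * x ^ 2))
      = ∫ x in Set.Ioi (0:ℝ), x ^ (4:ℝ) * Real.exp (-b * x ^ (2:ℝ)) := by
    congr 1; funext x
    rw [show ((4:ℝ)) = ((4:ℕ):ℝ) by norm_num, show ((2:ℝ)) = ((2:ℕ):ℝ) by norm_num,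
      Real.rpow_natCast, Real.rpow_natCast]
  rw [h2, integral_rpow_mul_exp_neg_mul_rpow (by norm_num) (by norm_num) hb] at h
  have hG : Real.Gamma ((4 + 1) / 2) = 3/4 * Real.sqrt π := by
    rw [show ((4:ℝ) + 1)/2 = 3/2 + 1 by norm_num, Real.Gamma_add_one (by norm_num),
      show ((3:ℝ)/2) = 1/2 + 1 by norm_num, Real.Gamma_add_one (by norm_num),
      Real.Gamma_one_half_eq]
    ring
  rw [hG, show (-((4:ℝ) + 1) / 2) = -(5:ℝ)/2 by norm_num] at h
  rw [h]; ring

lemma two_pow_52 : (2:ℝ) ^ ((5:ℝ)/2) = 4 * Real.sqrt 2 := by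
  rw [show (5:ℝ)/2 = 2 + 1/2 by norm_num, Real.rpow_add two_pos, ← Real.sqrt_eq_rpow,
    show ((2:ℝ)) = ((2:ℕ):ℝ) by norm_num]
  rw [Real.rpow_natCast]
  norm_num

lemma D_eq (a : ℝ) : ∫ w, w ^ 4 * gpdf (a * w) ∂stdGaussian
    = 3 / Real.sqrt (2 * π) * (a ^ 2 + 1) ^ (-(5:ℝ)/2) := by
  rw [integral_stdGaussian]
  have hpt : ∀ w : ℝ, (w ^ 4 * gpdf (a * w)) * gpdf w
      = (2 * π)⁻¹ * (w ^ 4 * Real.exp (-((a ^ 2 + 1)/2) * w ^ 2)) := by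
    intro w
    unfold gpdf
    have he : -(a * w) ^ 2 / 2 + -w ^ 2 / 2 = -((a ^ 2 + 1)/2) * w ^ 2 := by ring
    have hs : (Real.sqrt (2 * π))⁻¹ * (Real.sqrt (2 * π))⁻¹ = (2 * π)⁻¹ := by
      rw [← mul_inv, Real.mul_self_sqrt (by positivity)]
    calc (w ^ 4 * ((Real.sqrt (2*π))⁻¹ * Real.exp (-(a*w) ^ 2 / 2))) * ((Real.sqrt (2*π))⁻¹ * Real.exp (-w ^ 2/2))
        = ((Real.sqrt (2*π))⁻¹ * (Real.sqrt (2*π))⁻¹) * (w ^ 4 * (Real.exp (-(a*w) ^ 2 / 2) * Real.exp (-w ^ 2/2))) := by ring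
      _ = _ := by rw [hs, ← Real.exp_add, he]
  rw [show (fun w => (w ^ 4 * gpdf (a * w)) * gpdf w)
      = fun w => (2 * π)⁻¹ * (w ^ 4 * Real.exp (-((a ^ 2 + 1)/2) * w ^ 2)) from funext hpt]
  rw [MeasureTheory.integral_const_mul, integral_x4_exp (by positivity : (0:ℝ) < (a ^ 2 + 1)/2)]
  rw [Real.div_rpow (by positivity) (by norm_num)]
  rw [show (2:ℝ) ^ (-(5:ℝ)/2) = ((2:ℝ) ^ ((5:ℝ)/2))⁻¹ by
    rw [← Real.rpow_neg (by norm_num : (0:ℝ) ≤ 2)]; norm_num]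
  rw [two_pow_52, Real.sqrt_mul (by norm_num : (0:ℝ) ≤ 2)]
  have h2 : Real.sqrt 2 * Real.sqrt 2 = 2 := Real.mul_self_sqrt (by norm_num)
  have hp : Real.sqrt π * Real.sqrt π = π := Real.mul_self_sqrt Real.pi_pos.le
  have h2p : (0:ℝ) < Real.sqrt 2 := Real.sqrt_pos.mpr (by norm_num)
  have hpp : (0:ℝ) < Real.sqrt π := Real.sqrt_pos.mpr Real.pi_pos
  have hπ : (0:ℝ) < π := Real.pi_pos
  field_simp
  linear_combination π * h2 + (Real.sqrt 2 * Real.sqrt 2) * hp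

lemma hasDerivAt_LHS (a : ℝ) :
    HasDerivAt (fun x => ∫ w, w ^ 3 * Phi (x * w) ∂stdGaussian)
      (∫ w, w ^ 4 * gpdf (a * w) ∂stdGaussian) a := by
  have key := hasDerivAt_integral_of_dominated_loc_of_deriv_le
    (μ := stdGaussian) (F := fun x w => w ^ 3 * Phi (x * w))
    (F' := fun x w => w ^ 4 * gpdf (x * w))
    (bound := fun w => (Real.sqrt (2*π))⁻¹ * w ^ 4) (x₀ := a) (s := Metric.ball a 1) (Metric.ball_mem_nhds a one_pos)
    (Filter.Eventually.of_forall fun x =>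
      (((continuous_pow 3).mul (Phi_cont.comp (continuous_const.mul continuous_id))).aestronglyMeasurable))
    ?_ ?_ ?_ ?_ ?_
  · exact key.2
  · -- Integrable (F a)
    refine integrable_cube_stdGaussian.mono
      (((continuous_pow 3).mul (Phi_cont.comp (continuous_const.mul continuous_id))).aestronglyMeasurable)
      (Filter.Eventually.of_forall fun w => ?_)
    rw [Real.norm_eq_abs, Real.norm_eq_abs,
      abs_of_nonneg (by positivity : (0:ℝ) ≤ |w| ^ 3), abs_mul, ← pow_abs]
    have h1 : |Phi (a * w)| ≤ 1 := by
      rw [abs_of_nonneg (Phi_nonneg _)]; exact Phi_le_one _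
    nlinarith [abs_nonneg w, pow_nonneg (abs_nonneg w) 3, abs_nonneg (Phi (a*w))]
  · exact ((continuous_pow 4).mul
      (gpdf_cont.comp (continuous_const.mul continuous_id))).aestronglyMeasurable
  · refine Filter.Eventually.of_forall fun w => fun x _ => ?_
    show |w ^ 4 * gpdf (x * w)| ≤ (Real.sqrt (2*π))⁻¹ * w ^ 4
    rw [abs_mul, abs_of_nonneg (by positivity : (0:ℝ) ≤ w ^ 4),
      abs_of_nonneg (gpdf_nonneg _)]
    calc w ^ 4 * gpdf (x * w) ≤ w ^ 4 * (Real.sqrt (2*π))⁻¹ :=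
          mul_le_mul_of_nonneg_left (gpdf_le _) (by positivity)
      _ = (Real.sqrt (2*π))⁻¹ * w ^ 4 := by ring
  · exact integrable_bound_stdGaussian
  · refine Filter.Eventually.of_forall fun w => fun x _ => ?_
    have h := ((hasDerivAt_Phi (x * w)).comp x (hasDerivAt_mul_const w)).const_mul (w ^ 3)
    refine h.congr_deriv ?_
    ring

lemma rhs_rewrite (a : ℝ) :
    (1 / Real.sqrt (2 * π)) * (a / Real.sqrt (a ^ 2 + 1)) * (2 + 1 / (a ^ 2 + 1))
      = (1 / Real.sqrt (2 * π)) *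
        (2 * a * (a ^ 2 + 1) ^ (-(1:ℝ)/2) + a * (a ^ 2 + 1) ^ (-(3:ℝ)/2)) := by
  have hx : (0:ℝ) < a ^ 2 + 1 := by positivity
  have hsq : Real.sqrt (a ^ 2 + 1) = (a ^ 2 + 1) ^ ((1:ℝ)/2) := Real.sqrt_eq_rpow _
  have h1 : (a ^ 2 + 1) ^ (-(1:ℝ)/2) = (Real.sqrt (a ^ 2 + 1))⁻¹ := by
    rw [hsq, ← Real.rpow_neg hx.le]; norm_num
  have h3 : (a ^ 2 + 1) ^ (-(3:ℝ)/2) = (Real.sqrt (a ^ 2 + 1))⁻¹ * (a ^ 2 + 1)⁻¹ := by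
    rw [show (-(3:ℝ)/2) = (-(1:ℝ)/2) + (-1) by norm_num, Real.rpow_add hx, h1,
      Real.rpow_neg_one]
  rw [h1, h3]
  field_simp

lemma hasDerivAt_RHS (a : ℝ) :
    HasDerivAt (fun a : ℝ => (1 / Real.sqrt (2 * π)) * (a / Real.sqrt (a ^ 2 + 1)) * (2 + 1 / (a ^ 2 + 1)))
      (3 / Real.sqrt (2 * π) * (a ^ 2 + 1) ^ (-(5:ℝ)/2)) a := by
  have hx : ∀ b : ℝ, (0:ℝ) < b ^ 2 + 1 := fun b => by positivity
  have hbase : HasDerivAt (fun b : ℝ => b ^ 2 + 1) (2 * a) a := by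
    simpa using (hasDerivAt_pow 2 a).add_const 1
  have hP : ∀ c : ℝ, HasDerivAt (fun b : ℝ => (b ^ 2 + 1) ^ (c:ℝ))
      (c * (a ^ 2 + 1) ^ (c - 1) * (2 * a)) a := by
    intro c
    exact (Real.hasDerivAt_rpow_const (Or.inl (hx a).ne')).comp a hbase
  have h1 : HasDerivAt (fun b : ℝ => 2 * b * (b ^ 2 + 1) ^ (-(1:ℝ)/2))
      (2 * (a ^ 2 + 1) ^ (-(1:ℝ)/2)
        + 2 * a * ((-(1:ℝ)/2) * (a ^ 2 + 1) ^ (-(1:ℝ)/2 - 1) * (2 * a))) a := by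
    have := ((hasDerivAt_id a).const_mul 2).mul (hP (-(1:ℝ)/2))
    refine this.congr_deriv ?_
    simp only [id_eq]; ring
  have h2 : HasDerivAt (fun b : ℝ => b * (b ^ 2 + 1) ^ (-(3:ℝ)/2))
      ((a ^ 2 + 1) ^ (-(3:ℝ)/2)
        + a * ((-(3:ℝ)/2) * (a ^ 2 + 1) ^ (-(3:ℝ)/2 - 1) * (2 * a))) a := by
    have := (hasDerivAt_id a).mul (hP (-(3:ℝ)/2))
    refine this.congr_deriv ?_
    simp only [id_eq]; ring
  have hsum := ((h1.add h2).const_mul (1 / Real.sqrt (2 * π)))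
  have heq : (fun a : ℝ => (1 / Real.sqrt (2 * π)) * (a / Real.sqrt (a ^ 2 + 1)) * (2 + 1 / (a ^ 2 + 1)))
      = fun b : ℝ => (1 / Real.sqrt (2 * π)) *
        (2 * b * (b ^ 2 + 1) ^ (-(1:ℝ)/2) + b * (b ^ 2 + 1) ^ (-(3:ℝ)/2)) := by
    funext b; exact rhs_rewrite b
  rw [heq]
  refine hsum.congr_deriv ?_
  -- derivative values equal
  have hxa : (0:ℝ) < a ^ 2 + 1 := hx a
  have e1 : (a ^ 2 + 1) ^ (-(1:ℝ)/2)
      = (a ^ 2 + 1) ^ 2 * (a ^ 2 + 1) ^ (-(5:ℝ)/2) := by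
    rw [← Real.rpow_natCast (a ^ 2 + 1) 2, ← Real.rpow_add hxa]; norm_num
  have e2 : (a ^ 2 + 1) ^ (-(3:ℝ)/2)
      = (a ^ 2 + 1) * (a ^ 2 + 1) ^ (-(5:ℝ)/2) := by
    nth_rewrite 2 [← Real.rpow_one (a ^ 2 + 1)]
    rw [← Real.rpow_add hxa]; norm_num
  have e3 : (a ^ 2 + 1) ^ (-(1:ℝ)/2 - 1) = (a ^ 2 + 1) * (a ^ 2 + 1) ^ (-(5:ℝ)/2) := by
    rw [show (-(1:ℝ)/2 - 1) = -(3:ℝ)/2 by norm_num]; exact e2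
  have e4 : (a ^ 2 + 1) ^ (-(3:ℝ)/2 - 1) = (a ^ 2 + 1) ^ (-(5:ℝ)/2) := by
    norm_num
  rw [e3, e4, e1, e2]
  ring

/-- For a standard Gaussian `w` and any real `A`,
`E[w³·Φ(A·w)] = (1/√(2π))·(A/√(A²+1))·(2 + 1/(A²+1))`. -/
theorem gaussian_cdf_third_moment (A : ℝ) :
    (∫ w, w ^ 3 * Phi (A * w) ∂stdGaussian)
      = (1 / Real.sqrt (2 * π)) * (A / Real.sqrt (A ^ 2 + 1)) * (2 + 1 / (A ^ 2 + 1)) := by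
  set f : ℝ → ℝ := fun x => (∫ w, w ^ 3 * Phi (x * w) ∂stdGaussian)
    - (1 / Real.sqrt (2 * π)) * (x / Real.sqrt (x ^ 2 + 1)) * (2 + 1 / (x ^ 2 + 1)) with hf
  have key : ∀ x : ℝ, HasDerivAt f 0 x := by
    intro x
    have h := (hasDerivAt_LHS x).sub (hasDerivAt_RHS x)
    rw [D_eq] at h
    rw [hf]
    exact h.congr_deriv (sub_self _)
  have hconst := is_const_of_deriv_eq_zero (fun x => (key x).differentiableAt)
    (fun x => (key x).deriv) A 0
  have h0L : (∫ w, w ^ 3 * Phi (0 * w) ∂stdGaussian) = 0 := by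
    have h1 : (fun w : ℝ => w ^ 3 * Phi (0 * w)) = fun w => Phi 0 * w ^ 3 := by
      funext w; rw [zero_mul]; ring
    rw [h1, integral_stdGaussian]
    have h2 : (fun w : ℝ => (Phi 0 * w ^ 3) * gpdf w) = fun w => Phi 0 * (w ^ 3 * gpdf w) := by
      funext w; ring
    rw [h2, MeasureTheory.integral_const_mul, integral_x3_gpdf, mul_zero]
  have hfA : f A = f 0 := hconst
  rw [hf] at hfA
  simp only [h0L] at hfA
  have h0R : (1 / Real.sqrt (2 * π)) * ((0:ℝ) / Real.sqrt ((0:ℝ) ^ 2 + 1)) * (2 + 1 / ((0:ℝ) ^ 2 + 1)) = 0 := by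
    norm_num
  rw [h0R] at hfA
  linarith
end

section
/- If (U, Ũ) is a bivariate Gaussian vector with standard normal marginals and correlation ρ ∈ [-1,1], then E[φ(U)·φ(Ũ)] = (1/(2π))·(√(1−ρ²) + ρ·π/2 + ρ·arcsin ρ), where φ is the ReLU function. -/
open MeasureTheory ProbabilityTheory Real
open scoped NNReal ENNReal

noncomputable def relu (x : ℝ) : ℝ := max x 0

instance : IsProbabilityMeasure stdGaussian :=
  inferInstanceAs (IsProbabilityMeasure (gaussianReal 0 1))

lemma relu_of_nonneg {c : ℝ} (h : 0 ≤ c) : relu c = c := max_eq_left h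
lemma relu_of_nonpos {c : ℝ} (h : c ≤ 0) : relu c = 0 := max_eq_right h

lemma relu_smul {r : ℝ} (hr : 0 ≤ r) (c : ℝ) : relu (r * c) = r * relu c := by
  unfold relu
  rcases le_total c 0 with h | h
  · rw [max_eq_right h, max_eq_right (mul_nonpos_of_nonneg_of_nonpos hr h), mul_zero]
  · rw [max_eq_left h, max_eq_left (mul_nonneg hr h)]

lemma stdGaussian_prod :
    stdGaussian.prod stdGaussian
      = ((volume : Measure ℝ).prod volume).withDensity
          (fun p => gaussianPDF 0 1 p.1 * gaussianPDF 0 1 p.2) := by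
  have h1 : _root_.stdGaussian = (volume : Measure ℝ).withDensity (gaussianPDF 0 1) :=
    gaussianReal_of_var_ne_zero 0 one_ne_zero
  refine Measure.prod_eq fun s t hs ht => ?_
  rw [withDensity_apply _ (hs.prod ht), ← Measure.prod_restrict,
    MeasureTheory.lintegral_prod_mul (measurable_gaussianPDF 0 1).aemeasurable
      (measurable_gaussianPDF 0 1).aemeasurable,
    h1, withDensity_apply _ hs, withDensity_apply _ ht]

lemma radial_integral : ∫ r in Set.Ioi (0:ℝ), r ^ 3 * Real.exp (-r ^ 2 / 2) = 2 := by
  have hderiv : ∀ r ∈ Set.Ici (0:ℝ),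
      HasDerivAt (fun r : ℝ => -(r ^ 2 + 2) * Real.exp (-r ^ 2 / 2))
        (r ^ 3 * Real.exp (-r ^ 2 / 2)) r := by
    intro r _
    have h1 : HasDerivAt (fun r : ℝ => -(r ^ 2 + 2)) (-(2 * r)) r := by
      have := ((hasDerivAt_pow 2 r).add_const 2).neg
      exact this.congr_deriv (by norm_num)
    have h2 : HasDerivAt (fun r : ℝ => -r ^ 2 / 2) (-r) r := by
      have := ((hasDerivAt_pow 2 r).neg).div_const 2
      exact this.congr_deriv (by norm_num; ring)
    have h3 : HasDerivAt (fun r : ℝ => Real.exp (-r ^ 2 / 2))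
        (Real.exp (-r ^ 2 / 2) * (-r)) r := h2.exp
    have := h1.mul h3
    exact this.congr_deriv (by ring)
  have hint : IntegrableOn (fun r : ℝ => r ^ 3 * Real.exp (-r ^ 2 / 2)) (Set.Ioi 0) := by
    have := integrableOn_rpow_mul_exp_neg_mul_sq (b := 1/2) (by norm_num) (s := 3) (by norm_num)
    refine this.congr_fun (fun x hx => ?_) measurableSet_Ioi
    beta_reduce
    rw [show ((3:ℝ)) = ((3:ℕ):ℝ) by norm_num, Real.rpow_natCast]
    congr 1
    ring_nf
  have htend : Filter.Tendsto (fun r : ℝ => -(r ^ 2 + 2) * Real.exp (-r ^ 2 / 2))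
      Filter.atTop (nhds 0) := by
    have key : Filter.Tendsto (fun u : ℝ => -(2 * u + 2) * Real.exp (-u))
        Filter.atTop (nhds 0) := by
      have t1 := tendsto_pow_mul_exp_neg_atTop_nhds_zero 1
      have t0 := tendsto_pow_mul_exp_neg_atTop_nhds_zero 0
      have := ((t1.const_mul (-2)).add (t0.const_mul (-2)))
      simpa using this.congr (fun u => by simp [Real.exp_neg]; ring)
    have hcomp : Filter.Tendsto (fun r : ℝ => r ^ 2 / 2) Filter.atTop Filter.atTop := by
      have h := (Filter.tendsto_id.atTop_mul_atTop₀ (Filter.tendsto_id (α := ℝ))).atTop_div_const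
        (show (0:ℝ) < 2 by norm_num)
      exact h.congr (fun r => by simp only [id]; ring)
    have := key.comp hcomp
    refine this.congr (fun r => ?_)
    simp only [Function.comp]
    rw [neg_div]
    ring_nf
  have := integral_Ioi_of_hasDerivAt_of_tendsto' hderiv hint htend
  rw [this]
  norm_num

lemma continuous_relu : Continuous relu := continuous_id.max continuous_const

lemma angular_integral (ρ : ℝ) (hρ₁ : -1 ≤ ρ) (hρ₂ : ρ ≤ 1) :
    ∫ θ in (-π)..π,
        relu (Real.cos θ) * relu (ρ * Real.cos θ + Real.sqrt (1 - ρ ^ 2) * Real.sin θ)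
      = (Real.sqrt (1 - ρ ^ 2) + ρ * (π / 2 + Real.arcsin ρ)) / 2 := by
  set θ₀ := Real.arccos ρ with hθ₀
  have hcos : Real.cos θ₀ = ρ := Real.cos_arccos hρ₁ hρ₂
  have hsin : Real.sin θ₀ = Real.sqrt (1 - ρ ^ 2) := Real.sin_arccos ρ
  have h0 : 0 ≤ θ₀ := Real.arccos_nonneg ρ
  have hπ' : θ₀ ≤ π := Real.arccos_le_pi ρ
  have hπ : 0 < π := Real.pi_pos
  set F : ℝ → ℝ := fun θ => relu (Real.cos θ) * relu (Real.cos (θ - θ₀)) with hF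
  have hFeq : (fun θ => relu (Real.cos θ)
      * relu (ρ * Real.cos θ + Real.sqrt (1 - ρ ^ 2) * Real.sin θ)) = F := by
    funext θ
    rw [hF]
    congr 1
    rw [Real.cos_sub, hcos, hsin]
    ring_nf
  rw [hFeq]
  have hFc : Continuous F := by
    exact (continuous_relu.comp Real.continuous_cos).mul
      (continuous_relu.comp (Real.continuous_cos.comp (continuous_id.sub continuous_const)))
  set a : ℝ := θ₀ - π / 2 with ha
  set b : ℝ := π / 2 with hb
  have hab : a ≤ b := by rw [ha, hb]; linarith
  have hpa : -π ≤ a := by rw [ha]; linarith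
  have hbπ : b ≤ π := by rw [hb]; linarith
  have hInt : ∀ u v : ℝ, IntervalIntegrable F volume u v :=
    fun u v => hFc.intervalIntegrable u v
  have hsplit1 : (∫ θ in (-π)..a, F θ) + (∫ θ in a..π, F θ) = ∫ θ in (-π)..π, F θ :=
    intervalIntegral.integral_add_adjacent_intervals (hInt _ _) (hInt _ _)
  have hsplit2 : (∫ θ in a..b, F θ) + (∫ θ in b..π, F θ) = ∫ θ in a..π, F θ :=
    intervalIntegral.integral_add_adjacent_intervals (hInt _ _) (hInt _ _)
  have z1 : (∫ θ in (-π)..a, F θ) = 0 := by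
    have heq : Set.EqOn F (fun _ => 0) (Set.uIcc (-π) a) := by
      intro θ hθ
      rw [Set.uIcc_of_le hpa] at hθ
      obtain ⟨hθ1, hθ2⟩ := hθ
      rcases le_or_gt θ (-(π/2)) with hc | hc
      · have : Real.cos θ ≤ 0 := by
          rw [← Real.cos_neg]
          exact Real.cos_nonpos_of_pi_div_two_le_of_le (by linarith) (by linarith)
        simp [hF, relu_of_nonpos this]
      · have : Real.cos (θ - θ₀) ≤ 0 := by
          rw [← Real.cos_neg, neg_sub]
          refine Real.cos_nonpos_of_pi_div_two_le_of_le (by rw [ha] at hθ2; linarith)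
            (by linarith)
        simp [hF, relu_of_nonpos this]
    rw [intervalIntegral.integral_congr heq]
    simp
  have z3 : (∫ θ in b..π, F θ) = 0 := by
    have heq : Set.EqOn F (fun _ => 0) (Set.uIcc b π) := by
      intro θ hθ
      rw [Set.uIcc_of_le hbπ] at hθ
      obtain ⟨hθ1, hθ2⟩ := hθ
      have : Real.cos θ ≤ 0 :=
        Real.cos_nonpos_of_pi_div_two_le_of_le (by rw [hb] at hθ1; linarith) (by linarith)
      simp [hF, relu_of_nonpos this]
    rw [intervalIntegral.integral_congr heq]
    simp
  have hmid : (∫ θ in a..b, F θ) = ∫ θ in a..b, Real.cos θ * Real.cos (θ - θ₀) := by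
    refine intervalIntegral.integral_congr ?_
    intro θ hθ
    rw [Set.uIcc_of_le hab] at hθ
    obtain ⟨hθ1, hθ2⟩ := hθ
    rw [ha] at hθ1; rw [hb] at hθ2
    have hc1 : 0 ≤ Real.cos θ :=
      Real.cos_nonneg_of_mem_Icc ⟨by linarith, by linarith⟩
    have hc2 : 0 ≤ Real.cos (θ - θ₀) :=
      Real.cos_nonneg_of_mem_Icc ⟨by linarith, by linarith⟩
    rw [hF]
    simp only
    rw [relu_of_nonneg hc1, relu_of_nonneg hc2]
  set G : ℝ → ℝ := fun θ => θ * Real.cos θ₀ / 2 + Real.sin (2 * θ - θ₀) / 4 with hG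
  have hval : (∫ θ in a..b, Real.cos θ * Real.cos (θ - θ₀)) = G b - G a := by
    refine intervalIntegral.integral_eq_sub_of_hasDerivAt (fun θ _ => ?_)
      ((Real.continuous_cos.mul
        (Real.continuous_cos.comp (continuous_id.sub continuous_const))).intervalIntegrable a b)
    have d1 : HasDerivAt (fun θ : ℝ => θ * Real.cos θ₀ / 2) (Real.cos θ₀ / 2) θ := by
      have := (hasDerivAt_mul_const (Real.cos θ₀) (x := θ)).div_const 2
      simpa using this
    have d2i : HasDerivAt (fun θ : ℝ => 2 * θ - θ₀) 2 θ := by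
      simpa using ((hasDerivAt_id θ).const_mul 2).sub_const θ₀
    have d2 : HasDerivAt (fun θ : ℝ => Real.sin (2 * θ - θ₀) / 4)
        (Real.cos (2 * θ - θ₀) * 2 / 4) θ := d2i.sin.div_const 4
    have := d1.add d2
    refine this.congr_deriv ?_
    have h2 := Real.cos_sub θ (θ - θ₀)
    rw [show θ - (θ - θ₀) = θ₀ by ring] at h2
    have h3 := Real.cos_add θ (θ - θ₀)
    rw [show θ + (θ - θ₀) = 2 * θ - θ₀ by ring] at h3
    rw [h2, h3]
    ring
  have hGval : G b - G a = (Real.sin θ₀ + Real.cos θ₀ * (π - θ₀)) / 2 := by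
    rw [hG, ha, hb]
    simp only
    rw [show 2 * (π / 2) - θ₀ = π - θ₀ by ring,
      show 2 * (θ₀ - π / 2) - θ₀ = -(π - θ₀) by ring,
      Real.sin_neg, Real.sin_pi_sub]
    ring
  have harc : θ₀ = π / 2 - Real.arcsin ρ := Real.arccos_eq_pi_div_two_sub_arcsin ρ
  rw [← hsplit1, ← hsplit2, z1, z3, hmid, hval, hGval, hcos, hsin, harc]
  ring

/-- For a bivariate Gaussian `(U, Ũ)` with standard normal marginals and correlation `ρ`,
realized as `U = u`, `Ũ = ρ·u + √(1-ρ²)·v` for independent standard Gaussians `u, v`,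
`E[φ(U)·φ(Ũ)] = (1/(2π))·(√(1−ρ²) + ρπ/2 + ρ·arcsin ρ)`. -/
theorem relu_correlated_gaussians (ρ : ℝ) (hρ : ρ ∈ Set.Icc (-1 : ℝ) 1) :
    (∫ p : ℝ × ℝ, relu p.1 * relu (ρ * p.1 + Real.sqrt (1 - ρ ^ 2) * p.2)
        ∂(stdGaussian.prod stdGaussian))
      = (1 / (2 * π)) * (Real.sqrt (1 - ρ ^ 2) + ρ * π / 2 + ρ * Real.arcsin ρ) := by
  obtain ⟨hρ₁, hρ₂⟩ := hρ
  have hπ : 0 < π := Real.pi_pos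
  set s : ℝ := Real.sqrt (1 - ρ ^ 2) with hs
  set w : ℝ → ℝ≥0 := fun x => (gaussianPDFReal 0 1 x).toNNReal with hw
  have hwm : Measurable (fun p : ℝ × ℝ => w p.1 * w p.2) := by
    exact ((measurable_gaussianPDFReal 0 1).real_toNNReal.comp measurable_fst).mul
      ((measurable_gaussianPDFReal 0 1).real_toNNReal.comp measurable_snd)
  have hdens : (fun p : ℝ × ℝ => gaussianPDF 0 1 p.1 * gaussianPDF 0 1 p.2)
      = fun p => ((w p.1 * w p.2 : ℝ≥0) : ℝ≥0∞) := by
    funext p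
    rw [gaussianPDF, gaussianPDF, ENNReal.coe_mul]
    rfl
  rw [stdGaussian_prod, hdens, integral_withDensity_eq_integral_smul hwm]
  set g : ℝ × ℝ → ℝ := fun p => (gaussianPDFReal 0 1 p.1 * gaussianPDFReal 0 1 p.2)
      * (relu p.1 * relu (ρ * p.1 + s * p.2)) with hg
  have hsmul : (fun p : ℝ × ℝ => (w p.1 * w p.2 : ℝ≥0)
      • (relu p.1 * relu (ρ * p.1 + s * p.2))) = g := by
    funext p
    rw [NNReal.smul_def, hg, NNReal.coe_mul, hw]
    simp only [Real.coe_toNNReal _ (gaussianPDFReal_nonneg 0 1 p.1),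
      Real.coe_toNNReal _ (gaussianPDFReal_nonneg 0 1 p.2)]
    rw [smul_eq_mul]
  rw [hsmul, ← Measure.volume_eq_prod, ← integral_comp_polarCoord_symm g]
  have htarget : polarCoord.target = Set.Ioi (0:ℝ) ×ˢ Set.Ioo (-π) π := rfl
  set R : ℝ → ℝ := fun r => (2 * π)⁻¹ * (r ^ 3 * Real.exp (-r ^ 2 / 2)) with hR
  set A : ℝ → ℝ := fun θ => relu (Real.cos θ) * relu (ρ * Real.cos θ + s * Real.sin θ) with hA
  have hpdf : ∀ x : ℝ, gaussianPDFReal 0 1 x = (Real.sqrt (2 * π))⁻¹ * Real.exp (-x ^ 2 / 2) := by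
    intro x
    rw [gaussianPDFReal]
    norm_num
  have hpoint : ∀ p ∈ polarCoord.target, p.1 • g (polarCoord.symm p) = R p.1 * A p.2 := by
    rintro ⟨r, θ⟩ hp
    rw [htarget] at hp
    obtain ⟨hr, -⟩ := hp
    have hr0 : (0:ℝ) ≤ r := le_of_lt hr
    have hsymm : polarCoord.symm (r, θ) = (r * Real.cos θ, r * Real.sin θ) := rfl
    rw [hsymm, hg]
    simp only [smul_eq_mul]
    rw [hpdf, hpdf]
    have hrelu1 : relu (r * Real.cos θ) = r * relu (Real.cos θ) := relu_smul hr0 _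
    have hrelu2 : relu (ρ * (r * Real.cos θ) + s * (r * Real.sin θ))
        = r * relu (ρ * Real.cos θ + s * Real.sin θ) := by
      rw [show ρ * (r * Real.cos θ) + s * (r * Real.sin θ)
          = r * (ρ * Real.cos θ + s * Real.sin θ) by ring]
      exact relu_smul hr0 _
    rw [hrelu1, hrelu2]
    have hexp : Real.exp (-(r * Real.cos θ) ^ 2 / 2) * Real.exp (-(r * Real.sin θ) ^ 2 / 2)
        = Real.exp (-r ^ 2 / 2) := by
      rw [← Real.exp_add]
      congr 1
      have h1 : Real.cos θ ^ 2 + Real.sin θ ^ 2 = 1 := Real.cos_sq_add_sin_sq θ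
      nlinarith [h1]
    have hsq : (Real.sqrt (2 * π))⁻¹ * (Real.sqrt (2 * π))⁻¹ = (2 * π)⁻¹ := by
      rw [← mul_inv]
      congr 1
      exact Real.mul_self_sqrt (by positivity)
    rw [hR, hA]
    simp only
    calc r * ((Real.sqrt (2*π))⁻¹ * Real.exp (-(r * Real.cos θ) ^ 2 / 2)
          * ((Real.sqrt (2*π))⁻¹ * Real.exp (-(r * Real.sin θ) ^ 2 / 2))
          * (r * relu (Real.cos θ) * (r * relu (ρ * Real.cos θ + s * Real.sin θ))))
        = ((Real.sqrt (2*π))⁻¹ * (Real.sqrt (2*π))⁻¹)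
            * (Real.exp (-(r * Real.cos θ) ^ 2 / 2) * Real.exp (-(r * Real.sin θ) ^ 2 / 2))
            * (r ^ 3 * (relu (Real.cos θ) * relu (ρ * Real.cos θ + s * Real.sin θ))) := by
          ring
      _ = (2*π)⁻¹ * (r ^ 3 * Real.exp (-r ^ 2 / 2))
            * (relu (Real.cos θ) * relu (ρ * Real.cos θ + s * Real.sin θ)) := by
          rw [hexp, hsq]; ring
  rw [setIntegral_congr_fun (by rw [htarget]; exact measurableSet_Ioi.prod measurableSet_Ioo)
    hpoint, htarget, Measure.volume_eq_prod, setIntegral_prod_mul]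
  have hRint : (∫ r in Set.Ioi (0:ℝ), R r) = (2 * π)⁻¹ * 2 := by
    rw [hR, MeasureTheory.integral_const_mul, radial_integral]
  have hAint : (∫ θ in Set.Ioo (-π) π, A θ) = (s + ρ * (π / 2 + Real.arcsin ρ)) / 2 := by
    rw [← MeasureTheory.integral_Ioc_eq_integral_Ioo,
      ← intervalIntegral.integral_of_le (by linarith), hA]
    exact angular_integral ρ hρ₁ hρ₂
  rw [hRint, hAint]
  field_simp
  ring
end

section
/- For x_n = 1 + 5/M_n, y_n = 1 + 1/M_n, and a ≠ 1 fixed, with L_n/M_n → λ and M_n → ∞, the normalized double sum (n₀²/(M_n² L_n² a^{2(L_n−1)}))·∑_{1≤ℓ₁<ℓ₂≤L_n} a^{2(L_n−1)}·x_n^{L_n−1−(ℓ₂−ℓ₁)}·y_n^{ℓ₂−ℓ₁}·(M_n²/n₀²) converges to e^{5λ}·(1/(4λ) − 1/(16λ²)) + e^{λ}/(16λ²). -/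
/-!
After cancelling the prefactors and pulling out `x ^ (L - 1)`, the double sum depends on
`x = 1 + 5/M` and `y = 1 + 1/M` only through `r = y / x`, as the double geometric sum
`∑_{1 ≤ ℓ₁ < ℓ₂ ≤ L} r ^ (ℓ₂ - ℓ₁) = r (r ^ L - 1 - L (r - 1)) / (r - 1) ^ 2`.
Since `(1 + t/M) ^ L → e^{λt}`, we get `x ^ L → e^{5λ}`, `r ^ L → e^{-4λ}` and
`L (r - 1) → -4λ`, so the normalized sum tends to `e^{5λ} (e^{-4λ} - 1 + 4λ) / (16λ²)`.
-/

open Filter Finset Real Topology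

section PairPowSum

variable {K : Type*} [Field K]

def pairPowSum (r : K) (L : ℕ) : K :=
  ∑ ℓ₂ ∈ Icc 1 L, ∑ ℓ₁ ∈ Ico 1 ℓ₂, r ^ (ℓ₂ - ℓ₁)

theorem pairPowSum_eq {r : K} (hr : r ≠ 1) (L : ℕ) :
    pairPowSum r L = r * (r ^ L - 1 - L * (r - 1)) / (r - 1) ^ 2 := by
  have inner : ∀ c ∈ Icc 1 L, ∑ ℓ₁ ∈ Ico 1 c, r ^ (c - ℓ₁) = (r ^ c - r) / (r - 1) := by
    intro c hc
    rw [sum_Ico_reflect (fun d => r ^ d) 1 c.le_succ, Nat.add_sub_cancel, Nat.add_sub_cancel_left,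
      geom_sum_Ico hr (by simp at hc; omega), pow_one]
  rw [pairPowSum, sum_congr rfl inner, ← sum_div, sum_sub_distrib, sum_const, Nat.card_Icc,
    Nat.add_sub_cancel, ← Ico_add_one_right_eq_Icc, geom_sum_Ico hr (by omega)]
  field_simp
  ring

theorem sum_pow_sub_mul_pow_eq {x : K} (hx : x ≠ 0) (y : K) (L : ℕ) :
    ∑ ℓ₂ ∈ Icc 1 L, ∑ ℓ₁ ∈ Ico 1 ℓ₂, x ^ (L - 1 - (ℓ₂ - ℓ₁)) * y ^ (ℓ₂ - ℓ₁) =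
      x ^ (L - 1) * pairPowSum (y / x) L := by
  rw [pairPowSum, mul_sum]
  refine sum_congr rfl fun ℓ₂ h₂ => ?_
  rw [mul_sum]
  refine sum_congr rfl fun ℓ₁ h₁ => ?_
  simp only [mem_Icc, mem_Ico] at h₂ h₁
  rw [div_pow, pow_sub₀ x hx (by omega : ℓ₂ - ℓ₁ ≤ L - 1)]
  field_simp

end PairPowSum

theorem tendsto_one_add_div_pow_of_tendsto_div {ι : Type*} {l : Filter ι} {m : ι → ℝ}
    {L : ι → ℕ} {lam : ℝ} (hm : Tendsto m l atTop)
    (hratio : Tendsto (fun i => (L i : ℝ) / m i) l (𝓝 lam)) (t : ℝ) :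
    Tendsto (fun i => (1 + t / m i) ^ L i) l (𝓝 (exp (lam * t))) := by
  have hbase : Tendsto (fun i => 1 + t / m i) l (𝓝 1) := by
    simpa using (hm.const_div_atTop t).const_add 1
  have hlog : Tendsto (fun i => (L i / m i) * (m i * log (1 + t / m i))) l (𝓝 (lam * t)) :=
    hratio.mul ((Real.tendsto_mul_log_one_add_div_atTop t).comp hm)
  refine ((continuous_exp.tendsto _).comp hlog).congr' ?_
  filter_upwards [hbase.eventually (lt_mem_nhds one_pos), hm.eventually_gt_atTop 0]
    with i hpos hmi
  rw [Function.comp_apply, ← mul_assoc, div_mul_cancel₀ _ hmi.ne', exp_nat_mul, exp_log hpos]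

theorem tendsto_pairPowSum_div_sq {ι : Type*} {l : Filter ι} {r : ι → ℝ} {L : ι → ℕ}
    {μ v : ℝ} (hμ : μ ≠ 0) (hr : Tendsto r l (𝓝 1))
    (hu : Tendsto (fun i => L i * (r i - 1)) l (𝓝 μ))
    (hv : Tendsto (fun i => r i ^ L i) l (𝓝 v)) :
    Tendsto (fun i => pairPowSum (r i) (L i) / (L i : ℝ) ^ 2) l (𝓝 ((v - 1 - μ) / μ ^ 2)) := by
  have hlim := hr.mul (((hv.sub_const 1).sub hu).div (hu.pow 2) (pow_ne_zero 2 hμ))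
  rw [one_mul] at hlim
  refine hlim.congr' ?_
  filter_upwards [hu.eventually_ne hμ] with i hi
  have hr1 : r i ≠ 1 := fun h => by simp [h] at hi
  have hL : (L i : ℝ) ≠ 0 := left_ne_zero_of_mul hi
  simp only [Pi.div_apply, pairPowSum_eq hr1, mul_pow]
  field_simp

theorem normalized_mixed_sum_eq {a α₀ m x : ℝ} (ha : a ≠ 0) (hα₀ : α₀ ≠ 0) (hm : m ≠ 0)
    (hx : x ≠ 0) (y : ℝ) {L : ℕ} (hL : 1 ≤ L) :
    (α₀ * m) ^ 2 / (m ^ 2 * (L : ℝ) ^ 2 * a ^ (2 * (L - 1))) *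
        ∑ ℓ₂ ∈ Icc 1 L, ∑ ℓ₁ ∈ Ico 1 ℓ₂,
          a ^ (2 * (L - 1)) * x ^ (L - 1 - (ℓ₂ - ℓ₁)) * y ^ (ℓ₂ - ℓ₁) * (m ^ 2 / (α₀ * m) ^ 2) =
      x ^ L / x * (pairPowSum (y / x) L / (L : ℝ) ^ 2) := by
  simp_rw [← sum_mul, mul_assoc (a ^ _), ← mul_sum, sum_pow_sub_mul_pow_eq hx, pow_sub₀ _ hx hL]
  field_simp

theorem mixed_sum_limit_general (a : ℝ) (ha0 : a ≠ 0)
    (α₀ : ℝ) (hα₀ : 0 < α₀) (lam : ℝ) (hlam : 0 < lam)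
    (M L : ℕ → ℕ)
    (hM : Tendsto (fun n => (M n : ℝ)) atTop atTop)
    (hratio : Tendsto (fun n => (L n : ℝ) / (M n : ℝ)) atTop (nhds lam)) :
    Tendsto (fun n =>
        ((α₀ * (M n : ℝ)) ^ 2 / ((M n : ℝ) ^ 2 * (L n : ℝ) ^ 2 * a ^ (2 * (L n - 1)))) *
        ∑ ℓ₂ ∈ Finset.Icc 1 (L n), ∑ ℓ₁ ∈ Finset.Ico 1 ℓ₂,
          a ^ (2 * (L n - 1)) * (1 + 5 / (M n : ℝ)) ^ (L n - 1 - (ℓ₂ - ℓ₁)) *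
            (1 + 1 / (M n : ℝ)) ^ (ℓ₂ - ℓ₁) * ((M n : ℝ) ^ 2 / (α₀ * (M n : ℝ)) ^ 2))
      atTop
      (nhds (Real.exp (5 * lam) * (1 / (4 * lam) - 1 / (16 * lam ^ 2)) +
        Real.exp lam / (16 * lam ^ 2))) := by
  have hx : Tendsto (fun n => 1 + 5 / (M n : ℝ)) atTop (𝓝 1) := by
    simpa using (hM.const_div_atTop 5).const_add 1
  have hy : Tendsto (fun n => 1 + 1 / (M n : ℝ)) atTop (𝓝 1) := by
    simpa using (hM.const_div_atTop 1).const_add 1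
  have hxL := tendsto_one_add_div_pow_of_tendsto_div hM hratio 5
  have hyL := tendsto_one_add_div_pow_of_tendsto_div hM hratio 1
  have hu : Tendsto (fun n => (L n : ℝ) * ((1 + 1 / (M n : ℝ)) / (1 + 5 / (M n : ℝ)) - 1))
      atTop (𝓝 (-4 * lam)) := by
    -- `L (y / x - 1) = -4 (L / M) / x`
    rw [← div_one (-4 * lam)]
    refine ((hratio.const_mul (-4)).div hx one_ne_zero).congr' ?_
    filter_upwards [hM.eventually_gt_atTop 0] with n hn
    simp only [Pi.div_apply]
    field_simp
    ring
  have hr : Tendsto (fun n => (1 + 1 / (M n : ℝ)) / (1 + 5 / (M n : ℝ))) atTop (𝓝 1) := by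
    simpa only [Pi.div_def, div_one] using hy.div hx one_ne_zero
  have hrL : Tendsto (fun n => ((1 + 1 / (M n : ℝ)) / (1 + 5 / (M n : ℝ))) ^ L n) atTop
      (𝓝 (exp (lam * 1) / exp (lam * 5))) := by
    simpa only [Pi.div_def, div_pow] using hyL.div hxL (exp_pos _).ne'
  have hsum := tendsto_pairPowSum_div_sq (by positivity) hr hu hrL
  convert ((hxL.div hx one_ne_zero).mul hsum).congr' ?_ using 2
  · field_simp
    ring
  · filter_upwards [hratio.eventually (lt_mem_nhds hlam)] with n hLM
    have hL : 1 ≤ L n := Nat.one_le_iff_ne_zero.2 fun h => by simp [h] at hLM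
    have hM0 : (M n : ℝ) ≠ 0 := fun h => by simp [h] at hLM
    exact (normalized_mixed_sum_eq ha0 hα₀.ne' hM0 (by positivity) _ hL).symm

/-- The normalized mixed-term double sum appearing in the second moment of `Θ_W`
converges to `e^{5λ}·(1/(4λ) − 1/(16λ²)) + e^{λ}/(16λ²)` in the
infinite-depth-and-width limit. -/
theorem mixed_sum_limit (a : ℝ) (ha0 : a ≠ 0) (ha1 : a ≠ 1)
    (α₀ : ℝ) (hα₀ : 0 < α₀) (lam : ℝ) (hlam : 0 < lam)
    (M L : ℕ → ℕ)
    (hM : Tendsto (fun n => (M n : ℝ)) atTop atTop)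
    (hL : Tendsto (fun n => (L n : ℝ)) atTop atTop)
    (hratio : Tendsto (fun n => (L n : ℝ) / (M n : ℝ)) atTop (nhds lam)) :
    Tendsto (fun n =>
        ((α₀ * (M n : ℝ)) ^ 2 / ((M n : ℝ) ^ 2 * (L n : ℝ) ^ 2 * a ^ (2 * (L n - 1)))) *
        ∑ ℓ₂ ∈ Finset.Icc 1 (L n), ∑ ℓ₁ ∈ Finset.Ico 1 ℓ₂,
          a ^ (2 * (L n - 1)) * (1 + 5 / (M n : ℝ)) ^ (L n - 1 - (ℓ₂ - ℓ₁)) *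
            (1 + 1 / (M n : ℝ)) ^ (ℓ₂ - ℓ₁) * ((M n : ℝ) ^ 2 / (α₀ * (M n : ℝ)) ^ 2))
      atTop
      (nhds (Real.exp (5 * lam) * (1 / (4 * lam) - 1 / (16 * lam ^ 2)) +
        Real.exp lam / (16 * lam ^ 2))) :=
  mixed_sum_limit_general a ha0 α₀ hα₀ lam hlam M L hM hratio
end
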